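/- arXiv:2503.10083 — 3 statements merged into one kernel-verified Lean document; each statement's English description precedes it below -/
import Mathlib

section
/- Assume char k = 0 and let m ≥ 2. If V is an Aut-stable k-subspace of the commutative polynomial ring A = k[z_1, …, z_m] that is not contained in k·1, then V = A. In other words, k[z_1, …, z_m] with m ≥ 2 has no proper Aut-stable subspaces. (Theorem 3.3(1).) -/
/-!
An Aut-stable subspace `V` is stable under the torus `X i ↦ t • X i`, so, `k` being infinite,
a Vandermonde argument shows that `V` contains every monomial occurring in one of its elements.
The automorphism `X j ↦ X j + X^e`, where `X j` does not occur in `X^e`, sends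
`X j ^ (a + b) * X^u` to a polynomial whose coefficient at `X j ^ a * X^(b • e) * X^u` is
`(a + b).choose a`, which is nonzero in characteristic zero. With `e = 0` this shows that the
monomials in `V` are closed under division, so a non-constant element of `V` yields some
`X i ∈ V`. With `X^e` arbitrary and `j = i` it then yields every monomial avoiding `X i`, and,
moving exponent from a second variable `X j` to `X i`, every monomial.
-/

open MvPolynomial Finset

theorem Submodule.mem_of_forall_sum_pow_smul_mem {k M : Type*} [Field k] [Infinite k]
    [AddCommGroup M] [Module k M] (V : Submodule k M) {N : ℕ} {v : ℕ → M}
    (h : ∀ t : k, t ≠ 0 → ∑ i ∈ range N, t ^ i • v i ∈ V) {n : ℕ} (hn : n < N) : v n ∈ V := by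
  rw [← Submodule.Quotient.mk_eq_zero, ← Module.forall_dual_apply_eq_zero_iff k]
  intro φ
  set ψ := φ ∘ₗ V.mkQ
  have hψ : ∀ x ∈ V, ψ x = 0 := fun x hx => by
    simp [ψ, (Submodule.Quotient.mk_eq_zero V).mpr hx]
  set P : Polynomial k := ∑ i ∈ range N, Polynomial.monomial i (ψ (v i))
  have hP : P = 0 := by
    refine Polynomial.eq_zero_of_infinite_isRoot P
      ((Set.finite_singleton (0 : k)).infinite_compl.mono fun t ht => ?_)
    have := hψ _ (h t ht)
    simp only [map_sum, map_smul, smul_eq_mul] at this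
    simpa [P, Polynomial.eval_finsetSum, mul_comm] using this
  have := congrArg (Polynomial.coeff · n) hP
  simpa [P, ψ, Polynomial.finsetSum_coeff, Polynomial.coeff_monomial, hn] using this

namespace MvPolynomial

variable {R σ : Type*} [CommSemiring R]

theorem aeval_C_pow_mul_X_monomial (w : σ → ℕ) (t : R) (s : σ →₀ ℕ) (a : R) :
    aeval (fun j => C (t ^ w j) * X j) (monomial s a)
      = monomial s (t ^ Finsupp.weight w s * a) := by
  rw [aeval_monomial, monomial_eq, Finsupp.weight_apply]
  simp only [mul_pow, Finsupp.prod_mul, ← map_pow, ← pow_mul]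
  rw [Finsupp.prod, Finsupp.prod, ← map_prod, Finset.prod_pow_eq_pow_sum, Finsupp.sum]
  simp [mul_comm, mul_left_comm]

theorem coeff_aeval_C_pow_mul_X (w : σ → ℕ) (t : R) (p : MvPolynomial σ R) (d : σ →₀ ℕ) :
    coeff d (aeval (fun j => C (t ^ w j) * X j) p) = t ^ Finsupp.weight w d * coeff d p := by
  classical
  induction p using MvPolynomial.induction_on' with
  | monomial s a =>
    rw [aeval_C_pow_mul_X_monomial, coeff_monomial, coeff_monomial]
    split_ifs with h
    · rw [h]
    · rw [mul_zero]
  | add p q hp hq => rw [map_add, coeff_add, coeff_add, hp, hq, mul_add]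

theorem aeval_update_X_eq_self [DecidableEq σ] {j : σ} {q : MvPolynomial σ R}
    (hq : j ∉ q.vars) (r : MvPolynomial σ R) : aeval (Function.update X j r) q = q := by
  conv_rhs => rw [← aeval_X_left_apply q]
  exact eval₂Hom_congr' rfl
    (fun i hi _ => Function.update_of_ne (ne_of_mem_of_not_mem hi hq) _ _) rfl

theorem notMem_vars_monomial {j : σ} {u : σ →₀ ℕ} (hu : u j = 0) (a : R) :
    j ∉ (monomial u a).vars := by
  classical
  rw [mem_vars_iff_mem_support]
  rintro ⟨d, hd, hj⟩
  rw [Finset.mem_singleton.mp (support_monomial_subset hd)] at hj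
  exact Finsupp.mem_support_iff.mp hj hu

theorem coeff_aeval_update_X_add_monomial [DecidableEq σ] {j : σ} {e u : σ →₀ ℕ}
    (he : e j = 0) (hu : u j = 0) (a b : ℕ) :
    coeff (Finsupp.single j a + b • e + u)
      (aeval (Function.update X j (X j + monomial e 1))
        (monomial (Finsupp.single j (a + b) + u) (1 : R)))
      = ((a + b).choose a : R) := by
  have hterm : ∀ d ∈ range (a + b + 1), X j ^ d * monomial e 1 ^ (a + b - d)
      * ((a + b).choose d : MvPolynomial σ R) * monomial u 1
      = monomial (Finsupp.single j d + (a + b - d) • e + u) ((a + b).choose d : R) := by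
    intro d _
    rw [X_pow_eq_monomial, monomial_pow, one_pow, ← map_natCast C, C_apply, monomial_mul,
      monomial_mul, monomial_mul, add_zero, one_mul, mul_one, one_mul]
  rw [monomial_single_add, map_mul, map_pow, aeval_X, Function.update_self,
    aeval_update_X_eq_self (notMem_vars_monomial hu 1), add_pow, Finset.sum_mul,
    Finset.sum_congr rfl hterm, coeff_sum, Finset.sum_eq_single a]
  · rw [coeff_monomial, if_pos (by rw [Nat.add_sub_cancel_left])]
  · intro d _ hd
    rw [coeff_monomial, if_neg]
    intro h
    exact hd (by simpa [he, hu] using congrArg (· j) h)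
  · simp

theorem exists_coeff_ne_zero_of_notMem_one {f : MvPolynomial σ R}
    (hf : f ∉ (1 : Submodule R (MvPolynomial σ R))) : ∃ s ≠ 0, coeff s f ≠ 0 := by
  classical
  by_contra! h
  refine hf (Submodule.mem_one.mpr ⟨coeff 0 f, ?_⟩)
  ext s
  rw [algebraMap_eq, coeff_C]
  split_ifs with hs
  · rw [hs]
  · exact (h s (Ne.symm hs)).symm

end MvPolynomial

def Submodule.IsAutStable {R A : Type*} [CommSemiring R] [Semiring A] [Algebra R A]
    (V : Submodule R A) : Prop :=
  ∀ σ : A ≃ₐ[R] A, ∀ v ∈ V, σ v ∈ V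

namespace Submodule.IsAutStable

variable {k σ : Type*} [Field k] {V : Submodule k (MvPolynomial σ k)}

theorem aeval_mem (hV : V.IsAutStable) {g g' : σ → MvPolynomial σ k}
    (hg : ∀ i, aeval g' (g i) = X i) (hg' : ∀ i, aeval g (g' i) = X i)
    {p : MvPolynomial σ k} (hp : p ∈ V) : aeval g p ∈ V :=
  hV (AlgEquiv.ofAlgHom (aeval g) (aeval g')
    (algHom_ext fun i => by rw [AlgHom.comp_apply, aeval_X, hg', AlgHom.id_apply])
    (algHom_ext fun i => by rw [AlgHom.comp_apply, aeval_X, hg, AlgHom.id_apply])) p hp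

theorem aeval_update_X_add_mem [DecidableEq σ] (hV : V.IsAutStable) {j : σ}
    {q : MvPolynomial σ k} (hq : j ∉ q.vars) {p : MvPolynomial σ k} (hp : p ∈ V) :
    aeval (Function.update X j (X j + q)) p ∈ V := by
  refine hV.aeval_mem (g' := Function.update X j (X j - q)) (fun i => ?_) (fun i => ?_) hp <;>
    rcases eq_or_ne i j with rfl | hi
  · rw [Function.update_self, map_add, aeval_X, Function.update_self,
      aeval_update_X_eq_self hq, sub_add_cancel]
  · rw [Function.update_of_ne hi, aeval_X, Function.update_of_ne hi]
  · rw [Function.update_self, map_sub, aeval_X, Function.update_self,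
      aeval_update_X_eq_self hq, add_sub_cancel_right]
  · rw [Function.update_of_ne hi, aeval_X, Function.update_of_ne hi]

section Infinite

variable [Infinite k]

theorem weightedHomogeneousComponent_mem (hV : V.IsAutStable) (w : σ → ℕ)
    {p : MvPolynomial σ k} (hp : p ∈ V) (n : ℕ) : weightedHomogeneousComponent w n p ∈ V := by
  classical
  set N := p.support.sup (Finsupp.weight w) + 1
  have hN : ∀ d ∈ p.support, Finsupp.weight w d < N := fun d hd =>
    Nat.lt_succ_of_le (Finset.le_sup hd)
  rcases lt_or_ge n N with hn | hn
  · refine V.mem_of_forall_sum_pow_smul_mem (v := (weightedHomogeneousComponent w · p))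
      (fun t ht => ?_) hn
    have hscale : aeval (fun j => C (t ^ w j) * X j) p
        = ∑ i ∈ range N, t ^ i • weightedHomogeneousComponent w i p := by
      ext d
      simp only [coeff_aeval_C_pow_mul_X, coeff_sum, coeff_smul, smul_eq_mul,
        coeff_weightedHomogeneousComponent, mul_ite, mul_zero, Finset.sum_ite_eq, mem_range]
      split_ifs with h
      · rfl
      · rw [notMem_support_iff.mp fun hd => h (hN d hd), mul_zero]
    rw [← hscale]
    refine hV.aeval_mem (g' := fun j => C (t⁻¹ ^ w j) * X j) (fun i => ?_) (fun i => ?_) hp <;>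
      rw [map_mul, aeval_C, aeval_X, algebraMap_eq, ← mul_assoc, ← map_mul, ← mul_pow]
    · rw [mul_inv_cancel₀ ht, one_pow, map_one, one_mul]
    · rw [inv_mul_cancel₀ ht, one_pow, map_one, one_mul]
  · rw [weightedHomogeneousComponent_eq_zero' n p fun d hd => (hN d hd).trans_le hn |>.ne]
    exact V.zero_mem

theorem exists_mem_coeff_eq_ite (hV : V.IsAutStable) {p : MvPolynomial σ k} (hp : p ∈ V)
    (s : σ →₀ ℕ) (S : Finset σ) :
    ∃ q ∈ V, ∀ d, coeff d q = if ∀ i ∈ S, d i = s i then coeff d p else 0 := by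
  classical
  induction S using Finset.induction_on with
  | empty => exact ⟨p, hp, fun d => by simp⟩
  | insert i S _ ih =>
    obtain ⟨q, hqV, hq⟩ := ih
    refine ⟨weightedHomogeneousComponent (Pi.single i 1) (s i) q,
      hV.weightedHomogeneousComponent_mem _ hqV _, fun d => ?_⟩
    rw [coeff_weightedHomogeneousComponent, Finsupp.weight_single_one_apply, hq]
    simp only [Finset.forall_mem_insert]
    split_ifs <;> tauto

theorem monomial_mem_of_coeff_ne_zero (hV : V.IsAutStable) {p : MvPolynomial σ k}
    (hp : p ∈ V) {s : σ →₀ ℕ} (hs : coeff s p ≠ 0) : monomial s 1 ∈ V := by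
  classical
  set S := p.support.biUnion Finsupp.support
  have hsupp : ∀ d ∈ p.support, ∀ i ∉ S, d i = 0 := fun d hd i hi =>
    Finsupp.notMem_support_iff.mp fun h => hi (Finset.mem_biUnion.mpr ⟨d, hd, h⟩)
  have hS : ∀ d ∈ p.support, (∀ i ∈ S, d i = s i) → s = d := fun d hd h =>
    Finsupp.ext fun i => by
      by_cases hi : i ∈ S
      · exact (h i hi).symm
      · rw [hsupp d hd i hi, hsupp s (mem_support_iff.mpr hs) i hi]
  obtain ⟨q, hqV, hq⟩ := hV.exists_mem_coeff_eq_ite hp s S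
  have hqs : q = monomial s (coeff s p) := by
    ext d
    rw [hq, coeff_monomial]
    split_ifs with h₁ h₂ h₂
    · rw [h₂]
    · exact notMem_support_iff.mp fun hd => h₂ (hS d hd h₁)
    · exact absurd (fun i _ => h₂ ▸ rfl) h₁
    · rfl
  have := V.smul_mem (coeff s p)⁻¹ hqV
  rwa [hqs, smul_monomial, smul_eq_mul, inv_mul_cancel₀ hs] at this

end Infinite

section CharZero

variable [CharZero k] [DecidableEq σ]

theorem monomial_single_add_smul_add_mem (hV : V.IsAutStable) {j : σ} {e u : σ →₀ ℕ}
    (he : e j = 0) (hu : u j = 0) {a b : ℕ}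
    (h : monomial (Finsupp.single j (a + b) + u) 1 ∈ V) :
    monomial (Finsupp.single j a + b • e + u) 1 ∈ V := by
  refine hV.monomial_mem_of_coeff_ne_zero
    (hV.aeval_update_X_add_mem (notMem_vars_monomial he 1) h) ?_
  rw [coeff_aeval_update_X_add_monomial he hu]
  exact_mod_cast (Nat.choose_pos (Nat.le_add_right a b)).ne'

theorem monomial_mem_of_add_single_mem (hV : V.IsAutStable) {s : σ →₀ ℕ} {i : σ} {c : ℕ}
    (h : monomial (s + Finsupp.single i c) 1 ∈ V) : monomial s 1 ∈ V := by
  have hsource : Finsupp.single i (s i + c) + s.erase i = s + Finsupp.single i c := by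
    ext l
    rcases eq_or_ne l i with rfl | hl <;> simp [*]
  have := hV.monomial_single_add_smul_add_mem (e := 0) rfl Finsupp.erase_same (hsource ▸ h)
  rwa [smul_zero, add_zero, Finsupp.single_add_erase] at this

theorem monomial_mem_of_le (hV : V.IsAutStable) {s t : σ →₀ ℕ} (ht : monomial t 1 ∈ V)
    (hst : s ≤ t) : monomial s 1 ∈ V := by
  obtain ⟨r, rfl⟩ := exists_add_of_le hst
  clear hst
  induction r using Finsupp.induction generalizing s with
  | zero => simpa using ht
  | single_add i c r _ _ ih =>
    refine hV.monomial_mem_of_add_single_mem (i := i) (c := c)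
      (ih (s := s + Finsupp.single i c) ?_)
    rwa [add_assoc]

theorem exists_X_mem (hV : V.IsAutStable) {f : MvPolynomial σ k} (hf : f ∈ V)
    (hf1 : f ∉ (1 : Submodule k (MvPolynomial σ k))) : ∃ i, X i ∈ V := by
  obtain ⟨s, hs0, hfs⟩ := exists_coeff_ne_zero_of_notMem_one hf1
  obtain ⟨i, hi⟩ := Finsupp.ne_iff.mp hs0
  exact ⟨i, hV.monomial_mem_of_le (hV.monomial_mem_of_coeff_ne_zero hf hfs)
    (Finsupp.single_le_iff.mpr (Nat.one_le_iff_ne_zero.mpr hi))⟩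

theorem monomial_mem_of_X_mem_of_eq_zero (hV : V.IsAutStable) {j : σ} (hX : X j ∈ V)
    {s : σ →₀ ℕ} (hs : s j = 0) : monomial s 1 ∈ V := by
  have h := hV.monomial_single_add_smul_add_mem (e := s) (u := 0) (a := 0) (b := 1) hs rfl
    (by rwa [zero_add, add_zero])
  rwa [Finsupp.single_zero, zero_add, one_smul, add_zero] at h

theorem monomial_mem_of_X_mem [Nontrivial σ] (hV : V.IsAutStable) {i : σ} (hX : X i ∈ V)
    (s : σ →₀ ℕ) : monomial s 1 ∈ V := by
  obtain ⟨j, hji⟩ := exists_ne i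
  set u := (s.erase j).erase i
  have hsource : (Finsupp.single j (s j + s i) + u) i = 0 := by simp [u, hji]
  have := hV.monomial_single_add_smul_add_mem (e := Finsupp.single i 1) (by simp [hji.symm])
    (by simp [u, hji]) (hV.monomial_mem_of_X_mem_of_eq_zero hX hsource)
  have hs : s = Finsupp.single j (s j) + s i • Finsupp.single i 1 + u := by
    ext l
    rcases eq_or_ne l i with rfl | hli
    · simp [u, hji]
    rcases eq_or_ne l j with rfl | hlj <;> simp [u, *]
  rwa [hs]

theorem eq_top_of_X_mem [Nontrivial σ] (hV : V.IsAutStable) {i : σ} (hX : X i ∈ V) :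
    V = ⊤ := by
  rw [eq_top_iff, ← (basisMonomials σ k).span_eq, span_le, Set.range_subset_iff]
  intro s
  rw [coe_basisMonomials]
  exact hV.monomial_mem_of_X_mem hX s

end CharZero

end Submodule.IsAutStable

/-- Theorem 3.3(1): in characteristic zero, the polynomial ring `k[z₁, …, z_m]` with `m ≥ 2`
has no proper Aut-stable subspaces: any subspace stable under all `k`-algebra automorphisms
and not contained in `k·1` is the whole ring. -/
theorem statement7 {k : Type*} [Field k] [CharZero k] (m : ℕ) (hm : 2 ≤ m)
    (V : Submodule k (MvPolynomial (Fin m) k))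
    (hstab : ∀ σ : MvPolynomial (Fin m) k ≃ₐ[k] MvPolynomial (Fin m) k, ∀ v ∈ V, σ v ∈ V)
    (hV : ¬ V ≤ (1 : Submodule k (MvPolynomial (Fin m) k))) :
    V = ⊤ := by
  have hstable : V.IsAutStable := hstab
  obtain ⟨f, hfV, hf1⟩ := SetLike.not_le_iff_exists.mp hV
  obtain ⟨i, hi⟩ := hstable.exists_X_mem hfV hf1
  have : Nontrivial (Fin m) := Fin.nontrivial_iff_two_le.mpr hm
  exact hstable.eq_top_of_X_mem hi
end

section
/- Assume char k = 0 and let A = k[z] be the polynomial ring in one variable. Then: (i) every Aut-stable k-subalgebra B of A with B ≠ k·1 equals A; and (ii) every Aut-stable k-subspace V of A that is not contained in k·1 either equals A or is equal to the subspace {p ∈ k[z] : deg p ≤ d} of polynomials of degree at most d, for some integer d ≥ 1. (Theorem 3.3(2).) -/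
/-!
The translation `p(X) ↦ p(X + 1)` is an automorphism, and in characteristic zero
`p(X + 1) - p(X)` has degree exactly `deg p - 1`. Iterating, a stable subspace containing a
polynomial of degree `n` contains one of every degree `≤ n`, hence all of `degreeLE n`. A stable
subspace is therefore either everything or `degreeLE d` for its maximal degree `d`, and `d ≥ 1`
unless it consists of constants. A subalgebra of the form `degreeLE d` with `d ≥ 1` would contain
`X` but not `X ^ (d + 1)`, so a stable subalgebra other than `k` is everything.
-/

open Polynomial

namespace Polynomial

section Taylor

variable {R : Type*} [CommRing R]

theorem coeff_taylor_of_natDegree_le_succ (r : R) {p : R[X]} {n : ℕ}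
    (hp : p.natDegree ≤ n + 1) :
    (taylor r p).coeff n = p.coeff n + (n + 1) * p.coeff (n + 1) * r := by
  rw [taylor_coeff, eval_eq_sum_range' (n := 2)
    ((natDegree_hasseDeriv_le p n).trans_lt (by omega))]
  simp [Finset.sum_range_succ, hasseDeriv_coeff, add_comm 1 n]

variable [IsDomain R] [CharZero R]

theorem degree_taylor_sub_self {r : R} (hr : r ≠ 0) {p : R[X]} {n : ℕ}
    (hp : p.natDegree = n + 1) : (taylor r p - p).degree = n := by
  have hp0 : p ≠ 0 := by rintro rfl; simp at hp
  have hcoeff : (taylor r p - p).coeff n ≠ 0 := by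
    rw [coeff_sub, coeff_taylor_of_natDegree_le_succ r hp.le, add_sub_cancel_left, ← hp]
    exact mul_ne_zero (mul_ne_zero (by exact_mod_cast n.succ_ne_zero)
      (leadingCoeff_ne_zero.2 hp0)) hr
  have hq0 : taylor r p - p ≠ 0 := fun h => hcoeff (by rw [h, coeff_zero])
  have hlt := degree_sub_lt_left (degree_taylor p r) ((taylor_eq_zero r p).not.2 hp0)
    (leadingCoeff_taylor r p)
  rw [degree_taylor, degree_eq_natDegree hp0, hp, ← natDegree_lt_iff_degree_lt hq0] at hlt
  rw [degree_eq_natDegree hq0, natDegree_eq_of_le_of_coeff_ne_zero (by omega) hcoeff]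

end Taylor

section Field

variable {K : Type*} [Field K]

theorem degreeLE_natDegree_le_of_degreeLT_le {V : Submodule K K[X]} {p : K[X]} (hp : p ∈ V)
    (hp0 : p ≠ 0) (hlt : degreeLT K p.natDegree ≤ V) : degreeLE K p.natDegree ≤ V := by
  intro s hs
  set c := s.coeff p.natDegree / p.leadingCoeff
  have hlow : s - c • p ∈ degreeLT K p.natDegree := by
    rw [mem_degreeLT, degree_lt_iff_coeff_zero _ p.natDegree]
    intro m hm
    rw [coeff_sub, coeff_smul, smul_eq_mul]
    rcases hm.eq_or_lt with rfl | hgt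
    · simp [c, leadingCoeff_ne_zero.2 hp0]
    · rw [coeff_eq_zero_of_degree_lt ((mem_degreeLE.1 hs).trans_lt (by exact_mod_cast hgt)),
        coeff_eq_zero_of_natDegree_lt hgt, mul_zero, sub_zero]
  simpa using V.add_mem (hlt hlow) (V.smul_mem c hp)

theorem degreeLE_zero_le_one : degreeLE K 0 ≤ (1 : Submodule K K[X]) :=
  fun p hp => Submodule.mem_one.2 ⟨p.coeff 0, (eq_C_of_degree_le_zero (mem_degreeLE.1 hp)).symm⟩

variable [CharZero K] {V : Submodule K K[X]} {r : K}

theorem degreeLE_natDegree_le_of_taylor_mem (hr : r ≠ 0) (hV : ∀ p ∈ V, taylor r p ∈ V)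
    {p : K[X]} (hp : p ∈ V) (hp0 : p ≠ 0) : degreeLE K p.natDegree ≤ V := by
  obtain ⟨n, hn⟩ : ∃ n, p.natDegree = n := ⟨_, rfl⟩
  induction n generalizing p with
  | zero =>
    refine degreeLE_natDegree_le_of_degreeLT_le hp hp0 fun q hq => ?_
    rw [hn, mem_degreeLT, Nat.cast_zero, Nat.WithBot.lt_zero_iff, degree_eq_bot] at hq
    exact hq ▸ zero_mem V
  | succ n ih =>
    refine degreeLE_natDegree_le_of_degreeLT_le hp hp0 ?_
    have hq := degree_taylor_sub_self hr hn
    have hqn := natDegree_eq_of_degree_eq_some hq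
    rw [hn, degreeLT_succ_eq_degreeLE, ← hqn]
    exact ih (V.sub_mem (hV p hp) hp) (ne_zero_of_coe_le_degree hq.ge) hqn

theorem eq_top_or_eq_degreeLE_of_taylor_mem (hr : r ≠ 0) (hV : ∀ p ∈ V, taylor r p ∈ V)
    (hV0 : V ≠ ⊥) : V = ⊤ ∨ ∃ d : ℕ, V = degreeLE K d := by
  set S : Set ℕ := {n | ∃ p ∈ V, p ≠ 0 ∧ p.natDegree = n}
  by_cases hS : BddAbove S
  · obtain ⟨p, hp, hp0⟩ := Submodule.exists_mem_ne_zero_of_ne_bot hV0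
    obtain ⟨q, hq, hq0, hqd⟩ : sSup S ∈ S := Nat.sSup_mem ⟨_, p, hp, hp0, rfl⟩ hS
    refine Or.inr ⟨sSup S, le_antisymm (fun s hs => ?_) ?_⟩
    · rcases eq_or_ne s 0 with rfl | hs0
      · exact zero_mem _
      · exact mem_degreeLE.2 (degree_le_of_natDegree_le (le_csSup hS ⟨s, hs, hs0, rfl⟩))
    · exact hqd ▸ degreeLE_natDegree_le_of_taylor_mem hr hV hq hq0
  · refine Or.inl (eq_top_iff.2 fun s _ => ?_)
    obtain ⟨_, ⟨q, hq, hq0, rfl⟩, hlt⟩ := not_bddAbove_iff.1 hS s.natDegree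
    exact degreeLE_natDegree_le_of_taylor_mem hr hV hq hq0
      (mem_degreeLE.2 (degree_le_of_natDegree_le hlt.le))

theorem eq_top_or_eq_degreeLE_of_forall_algEquiv_mem
    (hV : ∀ σ : K[X] ≃ₐ[K] K[X], ∀ x ∈ V, σ x ∈ V) (hV1 : ¬ V ≤ 1) :
    V = ⊤ ∨ ∃ d : ℕ, 1 ≤ d ∧ V = degreeLE K d := by
  have hV0 : V ≠ ⊥ := fun h => hV1 (h ▸ bot_le)
  obtain htop | ⟨d, rfl⟩ :=
    eq_top_or_eq_degreeLE_of_taylor_mem one_ne_zero (fun p => hV (taylorEquiv 1) p) hV0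
  · exact Or.inl htop
  · refine Or.inr ⟨d, Nat.one_le_iff_ne_zero.2 ?_, rfl⟩
    rintro rfl
    exact hV1 degreeLE_zero_le_one

end Field

end Polynomial

/-- Theorem 3.3(2): in characteristic zero, `k[z]` has no proper Aut-stable subalgebras, and
every Aut-stable subspace not contained in `k·1` is either all of `k[z]` or the space of
polynomials of degree at most `d` for some `d ≥ 1`. -/
theorem statement8 {k : Type*} [Field k] [CharZero k] :
    (∀ B : Subalgebra k (Polynomial k),
      (∀ σ : Polynomial k ≃ₐ[k] Polynomial k, ∀ x ∈ B, σ x ∈ B) →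
      B ≠ ⊥ → B = ⊤) ∧
    (∀ V : Submodule k (Polynomial k),
      (∀ σ : Polynomial k ≃ₐ[k] Polynomial k, ∀ x ∈ V, σ x ∈ V) →
      ¬ V ≤ (1 : Submodule k (Polynomial k)) →
      V = ⊤ ∨ ∃ d : ℕ, 1 ≤ d ∧ V = Polynomial.degreeLE k (d : ℕ)) := by
  refine ⟨fun B hB hB0 => ?_, fun _ => eq_top_or_eq_degreeLE_of_forall_algEquiv_mem⟩
  have hB1 : ¬ Subalgebra.toSubmodule B ≤ 1 := by
    rwa [← Algebra.toSubmodule_bot, Subalgebra.toSubmodule.le_iff_le, le_bot_iff]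
  obtain htop | ⟨d, hd, hBd⟩ := eq_top_or_eq_degreeLE_of_forall_algEquiv_mem hB hB1
  · exact Algebra.toSubmodule_eq_top.1 htop
  · have hX : X ∈ B := show X ∈ Subalgebra.toSubmodule B from
      hBd ▸ mem_degreeLE.2 (degree_X_le.trans (by exact_mod_cast hd))
    have hXd : X ^ (d + 1) ∈ degreeLE k d := hBd ▸ pow_mem hX (d + 1)
    rw [mem_degreeLE, degree_X_pow, Nat.cast_le] at hXd
    omega
end

section
/- Let A and B be k-algebras, let F be an ℕ-filtration of A and G an ℕ-filtration of B, and define H_i = Σ_{j=0}^{i} F_j ⊗ G_{i−j} ⊆ A ⊗ B for each i ∈ ℕ. Then: (1) H = (H_i) is an ℕ-filtration of A ⊗ B; (2) gr_H(A ⊗ B) ≅ gr_F(A) ⊗ gr_G(B) as graded k-algebras; (3) if F is a good filtration and G is a firm filtration, then H is a good filtration; and (4) if both F and G are firm filtrations, then H is a firm filtration. (Lemma 1.2.) -/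
open scoped TensorProduct ENNReal

universe u v

variable (k : Type v) [Field k]

/-- An ℕ-filtration of a `k`-algebra `A`: an ascending chain of `k`-subspaces
`F 0 ⊆ F 1 ⊆ ⋯` with `k·1 ⊆ F 0`, `⋃ᵢ F i = A` and `F i * F j ⊆ F (i + j)`. -/
structure AlgFiltration (A : Type u) [Ring A] [Algebra k A] where
  F : ℕ → Submodule k A
  one_mem : (1 : A) ∈ F 0
  mono : ∀ i, F i ≤ F (i + 1)
  exhaustive : ∀ a : A, ∃ i, a ∈ F i
  mul_mem : ∀ i j : ℕ, ∀ x ∈ F i, ∀ y ∈ F j, x * y ∈ F (i + j)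

namespace AlgFiltration

variable {k} {A : Type u} [Ring A] [Algebra k A] (𝓕 : AlgFiltration k A)

/-- The Rees algebra `⊕ᵢ (F i) Xⁱ ⊆ A[X]` of a filtration. -/
def rees : Subalgebra k (Polynomial A) where
  carrier := {p | ∀ i, p.coeff i ∈ 𝓕.F i}
  add_mem' := fun hp hq i => by
    simpa using (𝓕.F i).add_mem (hp i) (hq i)
  mul_mem' := fun {p q} hp hq i => by
    show (p * q).coeff i ∈ 𝓕.F i
    rw [Polynomial.coeff_mul]
    refine Submodule.sum_mem _ fun x hx => ?_
    have h := 𝓕.mul_mem x.1 x.2 _ (hp x.1) _ (hq x.2)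
    have hx' : x.1 + x.2 = i := by simpa using hx
    rwa [hx'] at h
  algebraMap_mem' := fun c i => by
    rcases i with _ | i
    · simpa [Polynomial.algebraMap_apply, Algebra.algebraMap_eq_smul_one] using
        (𝓕.F 0).smul_mem c 𝓕.one_mem
    · simp [Polynomial.algebraMap_apply]

/-- The element `X` of the Rees algebra. -/
noncomputable def xElem : 𝓕.rees :=
  ⟨Polynomial.X, fun i => by
    rcases i with _ | _ | i
    · simp
    · simpa [Polynomial.coeff_X] using 𝓕.mono 0 𝓕.one_mem
    · simp [Polynomial.coeff_X]⟩

/-- The associated graded algebra `gr_F(A) = ⊕ᵢ F i / F (i-1)` of a filtration, realized as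
the Rees algebra modulo the two-sided ideal generated by the central element `X`. -/
def gr : Type u := RingQuot (fun a b : 𝓕.rees => a = 𝓕.xElem ∧ b = 0)

noncomputable instance : Ring 𝓕.gr :=
  inferInstanceAs (Ring (RingQuot (fun a b : 𝓕.rees => a = 𝓕.xElem ∧ b = 0)))

noncomputable instance : Algebra k 𝓕.gr :=
  inferInstanceAs (Algebra k (RingQuot (fun a b : 𝓕.rees => a = 𝓕.xElem ∧ b = 0)))

/-- The `k`-linear map sending `a ∈ F i` to the monomial `a Xⁱ` in the Rees algebra. -/
noncomputable def monoMap (i : ℕ) : 𝓕.F i →ₗ[k] 𝓕.rees where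
  toFun a :=
    ⟨Polynomial.monomial i (a : A), fun j => by
      rcases eq_or_ne j i with rfl | h
      · simp only [Polynomial.coeff_monomial, if_pos rfl]
        exact a.2
      · simp [Polynomial.coeff_monomial, h, Ne.symm h]⟩
  map_add' a b := by
    ext
    simp
  map_smul' c a := by
    ext
    simp

/-- The canonical projection from the Rees algebra onto the associated graded algebra. -/
noncomputable def grProj : 𝓕.rees →ₐ[k] 𝓕.gr :=
  RingQuot.mkAlgHom k (fun a b : 𝓕.rees => a = 𝓕.xElem ∧ b = 0)

/-- The degree-`i` homogeneous component `F i / F (i-1)` of the associated graded algebra,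
realized as the image of `(F i) Xⁱ` under the projection. -/
noncomputable def grPiece (i : ℕ) : Submodule k 𝓕.gr :=
  LinearMap.range (𝓕.grProj.toLinearMap ∘ₗ 𝓕.monoMap i)

end AlgFiltration

/-- A `k`-algebra `A` is a firm domain if `A ⊗[k] B` is a domain for every `k`-algebra `B`
which is a domain. -/
def IsFirmDomain (A : Type u) [Ring A] [Algebra k A] : Prop :=
  ∀ (B : Type u) [Ring B] [Algebra k B], IsDomain B → IsDomain (A ⊗[k] B)

/-- A filtration is good if its associated graded algebra is a domain.
`uGood k A` is the subspace of universally degree-`0` elements with respect to good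
ℕ-filtrations: the intersection of `F 0` over all good ℕ-filtrations of `A`. -/
noncomputable def uGood (A : Type u) [Ring A] [Algebra k A] : Submodule k A :=
  ⨅ (𝓕 : AlgFiltration k A) (_ : IsDomain 𝓕.gr), 𝓕.F 0

/-- A filtration is firm if its associated graded algebra is a firm domain.
`uFirm k A` is the intersection of `F 0` over all firm ℕ-filtrations of `A`. -/
noncomputable def uFirm (A : Type u) [Ring A] [Algebra k A] : Submodule k A :=
  ⨅ (𝓕 : AlgFiltration k A) (_ : IsFirmDomain k 𝓕.gr), 𝓕.F 0

/-- The Gelfand–Kirillov dimension of a `k`-algebra `A`: the supremum, over all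
finite-dimensional subspaces `V ⊆ A` containing `1`, of `limsup_n log(dim Vⁿ)/log n`. -/
noncomputable def GKdim (A : Type u) [Ring A] [Algebra k A] : ℝ≥0∞ :=
  ⨆ (V : Submodule k A) (_ : (1 : A) ∈ V) (_ : FiniteDimensional k V),
    Filter.limsup
      (fun n : ℕ => ENNReal.ofReal (Real.log (Module.finrank k ↥(V ^ n)) / Real.log n))
      Filter.atTop

/-- `R` is GKdim-additive if it has finite GK-dimension and
`GKdim (A ⊗ R) = GKdim A + GKdim R` for every `k`-algebra `A`. -/
def IsGKAdditive (R : Type u) [Ring R] [Algebra k R] : Prop :=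
  GKdim k R < ⊤ ∧
    ∀ (A : Type u) [Ring A] [Algebra k A], GKdim k (A ⊗[k] R) = GKdim k A + GKdim k R

/-- Membership in the family `𝓡₁` of GKdim-additive firm domains `R` with `u_firm(R) = k·1`. -/
def InR1 (R : Type u) [Ring R] [Algebra k R] : Prop :=
  IsGKAdditive k R ∧ IsFirmDomain k R ∧ uFirm k R = 1

/-- Membership in the family `𝓡₂` of GKdim-additive domains `R` with `u_good(R) = k·1`. -/
def InR2 (R : Type u) [Ring R] [Algebra k R] : Prop :=
  IsGKAdditive k R ∧ IsDomain R ∧ uGood k R = 1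

/-- The canonical image of `P ⊗ Q` in `M ⊗[k] N`, for subspaces `P ⊆ M` and `Q ⊆ N`. -/
def tensorSub {M N : Type u} [Ring M] [Ring N] [Algebra k M] [Algebra k N]
    (P : Submodule k M) (Q : Submodule k N) : Submodule k (M ⊗[k] N) :=
  Submodule.span k {z | ∃ x ∈ P, ∃ y ∈ Q, z = x ⊗ₜ[k] y}


/-!
Sending `[a] ⊗ [b]` to `[a ⊗ b]` defines an algebra map `gr_F(A) ⊗ gr_G(B) → gr_H(A ⊗ B)`,
which is onto because `H n` is spanned by the `a ⊗ b` with `a ∈ F p`, `b ∈ G q`, `p + q ≤ n`.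
For a left inverse, extend each symbol map `F i → gr_F(A)` linearly to all of `A` (possible
over a field); then `Σ_{i+j=n} σᵢ ⊗ σⱼ` sends `a ⊗ b` to `[a] ⊗ [b]` when `a ∈ F i`, `b ∈ G j`,
`i + j = n`, and kills `H m` for `m < n`, so together they induce a linear map
`gr_H(A ⊗ B) → gr_F(A) ⊗ gr_G(B)`.
Goodness and firmness of `H` are then transported along the isomorphism, using that `⊗` is
commutative and associative.
-/

open Polynomial

namespace AlgFiltration

section Graded

variable {k} {A : Type u} [Ring A] [Algebra k A] (𝓕 : AlgFiltration k A)

theorem monotone : Monotone 𝓕.F := monotone_nat_of_le_succ 𝓕.mono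

noncomputable def symbol (i : ℕ) : 𝓕.F i →ₗ[k] 𝓕.gr :=
  𝓕.grProj.toLinearMap ∘ₗ 𝓕.monoMap i

theorem grProj_surjective : Function.Surjective 𝓕.grProj :=
  RingQuot.mkAlgHom_surjective k _

theorem grProj_xElem : 𝓕.grProj 𝓕.xElem = 0 :=
  (RingQuot.mkAlgHom_rel k ⟨rfl, rfl⟩).trans (map_zero _)

theorem monoMap_succ {n : ℕ} {a : A} (ha : a ∈ 𝓕.F n) (ha' : a ∈ 𝓕.F (n + 1)) :
    𝓕.monoMap (n + 1) ⟨a, ha'⟩ = 𝓕.xElem * 𝓕.monoMap n ⟨a, ha⟩ := by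
  apply Subtype.ext
  simp [monoMap, xElem, X_mul_monomial]

theorem symbol_eq_zero_of_mem_of_lt {m n : ℕ} {a : A} (ha : a ∈ 𝓕.F m) (hmn : m < n)
    (ha' : a ∈ 𝓕.F n) : 𝓕.symbol n ⟨a, ha'⟩ = 0 := by
  obtain ⟨n, rfl⟩ : ∃ n', n = n' + 1 := ⟨n - 1, by omega⟩
  simp only [symbol, LinearMap.comp_apply, AlgHom.toLinearMap_apply,
    𝓕.monoMap_succ (𝓕.monotone (Nat.le_of_lt_succ hmn) ha), map_mul, grProj_xElem, zero_mul]

theorem symbol_mul_symbol {i j n : ℕ} (h : i + j = n) (a : 𝓕.F i) (b : 𝓕.F j) :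
    𝓕.symbol i a * 𝓕.symbol j b =
      𝓕.symbol n ⟨a * b, h ▸ 𝓕.mul_mem i j a a.2 b b.2⟩ := by
  subst h
  simp only [symbol, LinearMap.comp_apply, AlgHom.toLinearMap_apply, ← map_mul]
  congr 1
  apply Subtype.ext
  simp [monoMap, monomial_mul_monomial]

theorem rees_eq_sum_monoMap (p : 𝓕.rees) :
    p = ∑ n ∈ (p : A[X]).support, 𝓕.monoMap n ⟨(p : A[X]).coeff n, p.2 n⟩ := by
  apply Subtype.ext
  simpa [monoMap] using (p : A[X]).as_sum_support

theorem grProj_eq_sum_symbol (p : 𝓕.rees) :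
    𝓕.grProj p = ∑ n ∈ (p : A[X]).support, 𝓕.symbol n ⟨(p : A[X]).coeff n, p.2 n⟩ := by
  conv_lhs => rw [rees_eq_sum_monoMap 𝓕 p]
  simp [symbol]

@[elab_as_elim]
theorem gr_induction {motive : 𝓕.gr → Prop} (zero : motive 0)
    (add : ∀ x y, motive x → motive y → motive (x + y))
    (symbol : ∀ i (a : 𝓕.F i), motive (𝓕.symbol i a)) (x : 𝓕.gr) : motive x := by
  obtain ⟨p, rfl⟩ := 𝓕.grProj_surjective x
  rw [grProj_eq_sum_symbol]
  exact Finset.sum_induction _ motive add zero fun n _ => symbol n _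

noncomputable def symbolExt (i : ℕ) : A →ₗ[k] 𝓕.gr :=
  𝓕.symbol i ∘ₗ (𝓕.F i).subtype.leftInverse

theorem symbolExt_of_mem {i : ℕ} {a : A} (ha : a ∈ 𝓕.F i) :
    𝓕.symbolExt i a = 𝓕.symbol i ⟨a, ha⟩ := by
  rw [symbolExt, LinearMap.comp_apply]
  congr 1
  exact LinearMap.leftInverse_apply_of_inj (Submodule.ker_subtype _) ⟨a, ha⟩

theorem symbolExt_eq_zero_of_lt {m n : ℕ} {a : A} (ha : a ∈ 𝓕.F m) (hmn : m < n) :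
    𝓕.symbolExt n a = 0 := by
  rw [symbolExt_of_mem 𝓕 (𝓕.monotone hmn.le ha)]
  exact 𝓕.symbol_eq_zero_of_mem_of_lt ha hmn _

section Lift

variable {M : Type*} [AddCommGroup M] [Module k M] (t : ℕ → A →ₗ[k] M)

noncomputable def reesSum : 𝓕.rees →ₗ[k] M :=
  Polynomial.lsum t ∘ₗ 𝓕.rees.val.toLinearMap

theorem reesSum_monoMap {i : ℕ} (a : 𝓕.F i) : 𝓕.reesSum t (𝓕.monoMap i a) = t i a := by
  simp [reesSum, monoMap]

theorem reesSum_xElem_mul (ht : ∀ ⦃m n⦄, m < n → ∀ a ∈ 𝓕.F m, t n a = 0) (r : 𝓕.rees) :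
    𝓕.reesSum t (𝓕.xElem * r) = 0 := by
  rw [rees_eq_sum_monoMap 𝓕 r, Finset.mul_sum, map_sum]
  refine Finset.sum_eq_zero fun n _ => ?_
  rw [← monoMap_succ 𝓕 _ (𝓕.mono n (r.2 n)), reesSum_monoMap]
  exact ht n.lt_succ_self _ (r.2 n)

theorem exists_eq_xElem_mul_of_rel {p q : 𝓕.rees}
    (h : RingQuot.Rel (fun a b : 𝓕.rees => a = 𝓕.xElem ∧ b = 0) p q) :
    ∃ r, p - q = 𝓕.xElem * r := by
  induction h with
  | of h => exact ⟨1, by rw [h.1, h.2, sub_zero, mul_one]⟩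
  | add_left _ ih => simpa only [add_sub_add_right_eq_sub] using ih
  | @mul_left a b c _ ih =>
    obtain ⟨r, hr⟩ := ih
    exact ⟨r * c, by rw [← sub_mul, hr, mul_assoc]⟩
  | @mul_right c a b _ ih =>
    obtain ⟨r, hr⟩ := ih
    have hX : Commute 𝓕.xElem c := Subtype.ext (Polynomial.commute_X _)
    exact ⟨c * r, by rw [← mul_sub, hr, ← mul_assoc, ← hX.eq, mul_assoc]⟩

theorem grProj_eq_mk (p : 𝓕.rees) : 𝓕.grProj p = ⟨Quot.mk _ p⟩ := by
  simp only [grProj, RingQuot.mkAlgHom_def, RingQuot.mkRingHom_def]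
  rfl

variable {t} in
noncomputable def grLift (ht : ∀ ⦃m n⦄, m < n → ∀ a ∈ 𝓕.F m, t n a = 0) : 𝓕.gr →ₗ[k] M where
  toFun x := Quot.lift (𝓕.reesSum t) (fun p q h => by
      obtain ⟨r, hr⟩ := 𝓕.exists_eq_xElem_mul_of_rel h
      rw [← sub_eq_zero, ← map_sub, hr, reesSum_xElem_mul 𝓕 t ht]) x.toQuot
  map_add' x y := by
    obtain ⟨p, rfl⟩ := 𝓕.grProj_surjective x
    obtain ⟨q, rfl⟩ := 𝓕.grProj_surjective y
    rw [← map_add, grProj_eq_mk, grProj_eq_mk, grProj_eq_mk]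
    exact map_add _ p q
  map_smul' c x := by
    obtain ⟨p, rfl⟩ := 𝓕.grProj_surjective x
    rw [← map_smul, grProj_eq_mk, grProj_eq_mk]
    exact map_smul _ c p

theorem grLift_symbol (ht : ∀ ⦃m n⦄, m < n → ∀ a ∈ 𝓕.F m, t n a = 0) {i : ℕ} (a : 𝓕.F i) :
    𝓕.grLift ht (𝓕.symbol i a) = t i a := by
  change 𝓕.grLift ht (𝓕.grProj (𝓕.monoMap i a)) = t i a
  rw [grProj_eq_mk]
  exact 𝓕.reesSum_monoMap t a

end Lift

end Graded

section Functoriality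

variable {k} {A A' : Type u} [Ring A] [Algebra k A] [Ring A'] [Algebra k A']
  {𝓕 : AlgFiltration k A} {𝓕' : AlgFiltration k A'} (f : A →ₐ[k] A')
  (hf : ∀ i, ∀ a ∈ 𝓕.F i, f a ∈ 𝓕'.F i)

noncomputable def reesMap : 𝓕.rees →ₐ[k] 𝓕'.rees :=
  ((mapAlgHom f).comp 𝓕.rees.val).codRestrict 𝓕'.rees fun p i => by
    simpa using hf i _ (p.2 i)

theorem coe_reesMap (p : 𝓕.rees) : (reesMap f hf p : A'[X]) = (p : A[X]).map f := rfl

noncomputable def grMap : 𝓕.gr →ₐ[k] 𝓕'.gr :=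
  RingQuot.liftAlgHom k ⟨𝓕'.grProj.comp (reesMap f hf), by
    rintro _ _ ⟨rfl, rfl⟩
    have hX : reesMap f hf 𝓕.xElem = 𝓕'.xElem := Subtype.ext (by simp [coe_reesMap, xElem])
    simp [hX, grProj_xElem]⟩

theorem grMap_symbol {i : ℕ} (a : 𝓕.F i) :
    grMap f hf (𝓕.symbol i a) = 𝓕'.symbol i ⟨f a, hf i a a.2⟩ := by
  change grMap f hf (𝓕.grProj _) = 𝓕'.grProj _
  refine (RingQuot.liftAlgHom_mkAlgHom_apply _ _ _ _).trans (congrArg 𝓕'.grProj ?_)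
  exact Subtype.ext (by simp [coe_reesMap, monoMap])

end Functoriality

section Tensor

variable {k} {A B : Type u} [Ring A] [Algebra k A] [Ring B] [Algebra k B]
  (𝓕 : AlgFiltration k A) (𝓖 : AlgFiltration k B)

def tensorF (i : ℕ) : Submodule k (A ⊗[k] B) :=
  ⨆ j ∈ Finset.range (i + 1), tensorSub k (𝓕.F j) (𝓖.F (i - j))

variable {𝓕 𝓖} in
theorem tmul_mem_tensorF {p q i : ℕ} (hpq : p + q ≤ i) {a : A} {b : B}
    (ha : a ∈ 𝓕.F p) (hb : b ∈ 𝓖.F q) : a ⊗ₜ[k] b ∈ tensorF 𝓕 𝓖 i :=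
  Submodule.mem_iSup_of_mem p <| Submodule.mem_iSup_of_mem (by simp; omega) <|
    Submodule.subset_span ⟨a, ha, b, 𝓖.monotone (by omega) hb, rfl⟩

theorem tensorF_eq_span (i : ℕ) : tensorF 𝓕 𝓖 i = Submodule.span k
    {z | ∃ p q, p + q ≤ i ∧ ∃ a ∈ 𝓕.F p, ∃ b ∈ 𝓖.F q, z = a ⊗ₜ[k] b} := by
  refine le_antisymm (iSup₂_le fun j hj => Submodule.span_mono ?_) (Submodule.span_le.mpr ?_)
  · rintro _ ⟨a, ha, b, hb, rfl⟩
    exact ⟨j, i - j, by simp at hj; omega, a, ha, b, hb, rfl⟩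
  · rintro _ ⟨p, q, hpq, a, ha, b, hb, rfl⟩
    exact tmul_mem_tensorF hpq ha hb

theorem tensorF_mono : Monotone (tensorF 𝓕 𝓖) := fun i j hij => by
  rw [tensorF_eq_span, Submodule.span_le]
  rintro _ ⟨p, q, hpq, a, ha, b, hb, rfl⟩
  exact tmul_mem_tensorF (hpq.trans hij) ha hb

theorem tensorF_mul_le (i j : ℕ) : tensorF 𝓕 𝓖 i * tensorF 𝓕 𝓖 j ≤ tensorF 𝓕 𝓖 (i + j) := by
  rw [tensorF_eq_span, tensorF_eq_span, Submodule.span_mul_span, Submodule.span_le]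
  rintro _ ⟨_, ⟨p, q, hpq, a, ha, b, hb, rfl⟩, _, ⟨p', q', hpq', c, hc, d, hd, rfl⟩, rfl⟩
  simp only [SetLike.mem_coe, Algebra.TensorProduct.tmul_mul_tmul]
  exact tmul_mem_tensorF (by omega) (𝓕.mul_mem p p' a ha c hc) (𝓖.mul_mem q q' b hb d hd)

theorem exists_mem_tensorF (z : A ⊗[k] B) : ∃ i, z ∈ tensorF 𝓕 𝓖 i := by
  induction z using TensorProduct.induction_on with
  | zero => exact ⟨0, zero_mem _⟩
  | tmul a b =>
    obtain ⟨i, hi⟩ := 𝓕.exhaustive a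
    obtain ⟨j, hj⟩ := 𝓖.exhaustive b
    exact ⟨i + j, tmul_mem_tensorF le_rfl hi hj⟩
  | add x y hx hy =>
    obtain ⟨i, hi⟩ := hx
    obtain ⟨j, hj⟩ := hy
    exact ⟨max i j, add_mem (tensorF_mono 𝓕 𝓖 (le_max_left i j) hi)
      (tensorF_mono 𝓕 𝓖 (le_max_right i j) hj)⟩

def tensor : AlgFiltration k (A ⊗[k] B) where
  F := tensorF 𝓕 𝓖
  one_mem := by
    rw [Algebra.TensorProduct.one_def]
    exact tmul_mem_tensorF (Nat.le_refl (0 + 0)) 𝓕.one_mem 𝓖.one_mem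
  mono i := tensorF_mono 𝓕 𝓖 i.le_succ
  exhaustive := exists_mem_tensorF 𝓕 𝓖
  mul_mem i j _ hx _ hy := tensorF_mul_le 𝓕 𝓖 i j (Submodule.mul_mem_mul hx hy)

@[simp]
theorem tensor_F : (𝓕.tensor 𝓖).F = tensorF 𝓕 𝓖 := rfl

end Tensor

section GradedTensor

open Finset.HasAntidiagonal

variable {k} {A B : Type u} [Ring A] [Algebra k A] [Ring B] [Algebra k B]
  (𝓕 : AlgFiltration k A) (𝓖 : AlgFiltration k B)

variable {𝓕 𝓖} in
theorem symbol_tmul_mul_symbol_tmul {i j n : ℕ} (h : i + j = n) {a a' : A} {b b' : B}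
    (hab : a ⊗ₜ[k] b ∈ (𝓕.tensor 𝓖).F i) (hab' : a' ⊗ₜ[k] b' ∈ (𝓕.tensor 𝓖).F j)
    (hn : (a * a') ⊗ₜ[k] (b * b') ∈ (𝓕.tensor 𝓖).F n) :
    (𝓕.tensor 𝓖).symbol i ⟨_, hab⟩ * (𝓕.tensor 𝓖).symbol j ⟨_, hab'⟩ =
      (𝓕.tensor 𝓖).symbol n ⟨_, hn⟩ := by
  rw [symbol_mul_symbol _ h]
  simp only [Algebra.TensorProduct.tmul_mul_tmul]

theorem includeLeft_mem_tensor (i : ℕ) (a : A) (ha : a ∈ 𝓕.F i) :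
    Algebra.TensorProduct.includeLeft (S := k) a ∈ (𝓕.tensor 𝓖).F i :=
  tmul_mem_tensorF (Nat.le_of_eq (add_zero i)) ha 𝓖.one_mem

theorem includeRight_mem_tensor (i : ℕ) (b : B) (hb : b ∈ 𝓖.F i) :
    Algebra.TensorProduct.includeRight b ∈ (𝓕.tensor 𝓖).F i :=
  tmul_mem_tensorF (Nat.le_of_eq (zero_add i)) 𝓕.one_mem hb

theorem commute_grMap_includeLeft_grMap_includeRight (x : 𝓕.gr) (y : 𝓖.gr) :
    Commute (grMap _ (includeLeft_mem_tensor 𝓕 𝓖) x)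
      (grMap _ (includeRight_mem_tensor 𝓕 𝓖) y) := by
  induction x using gr_induction with
  | zero => rw [map_zero]; exact Commute.zero_left _
  | add x x' hx hx' => rw [map_add]; exact hx.add_left hx'
  | symbol i a =>
    induction y using gr_induction with
    | zero => rw [map_zero]; exact Commute.zero_right _
    | add y y' hy hy' => rw [map_add]; exact hy.add_right hy'
    | symbol j b =>
      have hab := tmul_mem_tensorF (𝓕 := 𝓕) (𝓖 := 𝓖) le_rfl a.2 b.2
      simp only [grMap_symbol, Algebra.TensorProduct.includeLeft_apply,
        Algebra.TensorProduct.includeRight_apply]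
      rw [Commute, SemiconjBy, symbol_tmul_mul_symbol_tmul rfl _ _ (by simpa using hab),
        symbol_tmul_mul_symbol_tmul (add_comm j i) _ _ (by simpa using hab)]
      simp only [mul_one, one_mul]

noncomputable def grTensorHom : 𝓕.gr ⊗[k] 𝓖.gr →ₐ[k] (𝓕.tensor 𝓖).gr :=
  Algebra.TensorProduct.lift _ _ (commute_grMap_includeLeft_grMap_includeRight 𝓕 𝓖)

theorem grTensorHom_symbol_tmul {i j n : ℕ} (h : i + j = n) (a : 𝓕.F i) (b : 𝓖.F j) :
    grTensorHom 𝓕 𝓖 (𝓕.symbol i a ⊗ₜ[k] 𝓖.symbol j b) =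
      (𝓕.tensor 𝓖).symbol n ⟨a ⊗ₜ[k] b, tmul_mem_tensorF h.le a.2 b.2⟩ := by
  rw [grTensorHom, Algebra.TensorProduct.lift_tmul, grMap_symbol, grMap_symbol]
  simp only [Algebra.TensorProduct.includeLeft_apply, Algebra.TensorProduct.includeRight_apply]
  rw [symbol_tmul_mul_symbol_tmul h _ _ (by simpa using tmul_mem_tensorF h.le a.2 b.2)]
  simp only [mul_one, one_mul]

noncomputable def tensorSymbol (n : ℕ) : A ⊗[k] B →ₗ[k] 𝓕.gr ⊗[k] 𝓖.gr :=
  ∑ ij ∈ antidiagonal n, TensorProduct.map (𝓕.symbolExt ij.1) (𝓖.symbolExt ij.2)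

theorem tensorSymbol_tmul (n : ℕ) (a : A) (b : B) : tensorSymbol 𝓕 𝓖 n (a ⊗ₜ[k] b) =
    ∑ ij ∈ antidiagonal n, 𝓕.symbolExt ij.1 a ⊗ₜ[k] 𝓖.symbolExt ij.2 b := by
  simp [tensorSymbol]

variable {𝓕 𝓖} in
theorem tensorSymbol_tmul_of_mem {i j : ℕ} {a : A} {b : B} (ha : a ∈ 𝓕.F i) (hb : b ∈ 𝓖.F j) :
    tensorSymbol 𝓕 𝓖 (i + j) (a ⊗ₜ[k] b) = 𝓕.symbol i ⟨a, ha⟩ ⊗ₜ[k] 𝓖.symbol j ⟨b, hb⟩ := by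
  rw [tensorSymbol_tmul, Finset.sum_eq_single (i, j), symbolExt_of_mem 𝓕 ha,
    symbolExt_of_mem 𝓖 hb]
  · rintro ⟨i', j'⟩ hij hne
    rcases Nat.lt_or_ge i i' with h | h
    · rw [symbolExt_eq_zero_of_lt 𝓕 ha h, TensorProduct.zero_tmul]
    · have : j < j' := by
        simp only [mem_antidiagonal, ne_eq, Prod.mk.injEq] at hij hne
        omega
      rw [symbolExt_eq_zero_of_lt 𝓖 hb this, TensorProduct.tmul_zero]
  · simp

variable {𝓕 𝓖} in
theorem tensorSymbol_eq_zero_of_lt {m n : ℕ} (hmn : m < n) {z : A ⊗[k] B}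
    (hz : z ∈ (𝓕.tensor 𝓖).F m) : tensorSymbol 𝓕 𝓖 n z = 0 := by
  rw [tensor_F, tensorF_eq_span] at hz
  induction hz using Submodule.span_induction with
  | mem z hz =>
    obtain ⟨p, q, hpq, a, ha, b, hb, rfl⟩ := hz
    rw [tensorSymbol_tmul]
    refine Finset.sum_eq_zero fun ⟨i, j⟩ hij => ?_
    rcases Nat.lt_or_ge p i with h | h
    · rw [symbolExt_eq_zero_of_lt 𝓕 ha h, TensorProduct.zero_tmul]
    · have : q < j := by
        simp only [mem_antidiagonal] at hij
        omega
      rw [symbolExt_eq_zero_of_lt 𝓖 hb this, TensorProduct.tmul_zero]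
  | zero => exact map_zero _
  | add x y _ _ hx hy => rw [map_add, hx, hy, add_zero]
  | smul c x _ hx => rw [map_smul, hx, smul_zero]

noncomputable def grTensorInv : (𝓕.tensor 𝓖).gr →ₗ[k] 𝓕.gr ⊗[k] 𝓖.gr :=
  grLift _ fun _ _ hmn _ hz => tensorSymbol_eq_zero_of_lt hmn hz

theorem grTensorInv_grTensorHom (z : 𝓕.gr ⊗[k] 𝓖.gr) :
    grTensorInv 𝓕 𝓖 (grTensorHom 𝓕 𝓖 z) = z := by
  induction z using TensorProduct.induction_on with
  | zero => simp
  | add z z' hz hz' => rw [map_add, map_add, hz, hz']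
  | tmul x y =>
    induction x using gr_induction with
    | zero => simp
    | add x x' hx hx' => rw [TensorProduct.add_tmul, map_add, map_add, hx, hx']
    | symbol i a =>
      induction y using gr_induction with
      | zero => simp
      | add y y' hy hy' => rw [TensorProduct.tmul_add, map_add, map_add, hy, hy']
      | symbol j b =>
        rw [grTensorHom_symbol_tmul 𝓕 𝓖 rfl, grTensorInv, grLift_symbol,
          tensorSymbol_tmul_of_mem]

noncomputable def grTensorPiece (n : ℕ) : Submodule k (𝓕.gr ⊗[k] 𝓖.gr) :=
  ⨆ j ∈ Finset.range (n + 1), tensorSub k (𝓕.grPiece j) (𝓖.grPiece (n - j))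

theorem symbol_tmul_mem_grTensorPiece {i j n : ℕ} (h : i + j = n) (a : 𝓕.F i) (b : 𝓖.F j) :
    𝓕.symbol i a ⊗ₜ[k] 𝓖.symbol j b ∈ grTensorPiece 𝓕 𝓖 n := by
  refine Submodule.mem_iSup_of_mem i (Submodule.mem_iSup_of_mem (by simp; omega) ?_)
  subst h
  rw [Nat.add_sub_cancel_left]
  exact Submodule.subset_span ⟨_, ⟨a, rfl⟩, _, ⟨b, rfl⟩, rfl⟩

theorem tensor_F_le_comap_symbolExt (n : ℕ) : (𝓕.tensor 𝓖).F n ≤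
    ((grTensorPiece 𝓕 𝓖 n).map (grTensorHom 𝓕 𝓖).toLinearMap).comap
      ((𝓕.tensor 𝓖).symbolExt n) := by
  rw [tensor_F, tensorF_eq_span, Submodule.span_le]
  rintro _ ⟨p, q, hpq, a, ha, b, hb, rfl⟩
  have hb' : b ∈ 𝓖.F (n - p) := 𝓖.monotone (by omega) hb
  refine ⟨_, symbol_tmul_mem_grTensorPiece 𝓕 𝓖 (Nat.add_sub_cancel' (by omega))
    ⟨a, ha⟩ ⟨b, hb'⟩, ?_⟩
  rw [AlgHom.toLinearMap_apply, grTensorHom_symbol_tmul 𝓕 𝓖 (n := n) (by omega),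
    symbolExt_of_mem _ (tmul_mem_tensorF hpq ha hb)]

theorem grPiece_tensor (n : ℕ) : (𝓕.tensor 𝓖).grPiece n =
    (grTensorPiece 𝓕 𝓖 n).map (grTensorHom 𝓕 𝓖).toLinearMap := by
  refine le_antisymm ?_ (Submodule.map_le_iff_le_comap.mpr
    (iSup₂_le fun j hj => Submodule.span_le.mpr ?_))
  · rintro _ ⟨⟨z, hz⟩, rfl⟩
    change (𝓕.tensor 𝓖).symbol n ⟨z, hz⟩ ∈ _
    rw [← symbolExt_of_mem]
    exact tensor_F_le_comap_symbolExt 𝓕 𝓖 n hz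
  · rintro _ ⟨_, ⟨a, rfl⟩, _, ⟨b, rfl⟩, rfl⟩
    have hj : j + (n - j) = n := by simp at hj; omega
    exact ⟨_, (grTensorHom_symbol_tmul 𝓕 𝓖 hj a b).symm⟩

theorem grTensorHom_surjective : Function.Surjective (grTensorHom 𝓕 𝓖) := by
  intro x
  induction x using gr_induction with
  | zero => exact ⟨0, map_zero _⟩
  | add x y hx hy =>
    obtain ⟨x, rfl⟩ := hx
    obtain ⟨y, rfl⟩ := hy
    exact ⟨x + y, map_add _ x y⟩
  | symbol n z =>
    obtain ⟨w, -, hw⟩ := (grPiece_tensor 𝓕 𝓖 n).le ⟨z, rfl⟩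
    exact ⟨w, hw⟩

noncomputable def grTensorEquiv : (𝓕.tensor 𝓖).gr ≃ₐ[k] 𝓕.gr ⊗[k] 𝓖.gr :=
  (AlgEquiv.ofBijective (grTensorHom 𝓕 𝓖)
    ⟨Function.LeftInverse.injective (grTensorInv_grTensorHom 𝓕 𝓖),
      grTensorHom_surjective 𝓕 𝓖⟩).symm

theorem map_grTensorEquiv_grPiece (n : ℕ) :
    ((𝓕.tensor 𝓖).grPiece n).map (grTensorEquiv 𝓕 𝓖).toLinearMap = grTensorPiece 𝓕 𝓖 n := by
  rw [grPiece_tensor, ← Submodule.map_comp]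
  convert Submodule.map_id _
  refine LinearMap.ext fun z => ?_
  exact (grTensorEquiv 𝓕 𝓖).apply_symm_apply z

end GradedTensor

end AlgFiltration

section FirmDomain

variable {k} {A B : Type u} [Ring A] [Algebra k A] [Ring B] [Algebra k B]

theorem IsFirmDomain.of_algEquiv (e : A ≃ₐ[k] B) (hB : IsFirmDomain k B) : IsFirmDomain k A :=
  fun C _ _ hC =>
    have := hB C hC
    (Algebra.TensorProduct.congr e (AlgEquiv.refl : C ≃ₐ[k] C)).toMulEquiv.isDomain _

theorem IsFirmDomain.isDomain_tensorProduct [IsDomain A] (hB : IsFirmDomain k B) :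
    IsDomain (A ⊗[k] B) :=
  have := hB A ‹_›
  (Algebra.TensorProduct.comm k A B).toMulEquiv.isDomain _

theorem IsFirmDomain.tensorProduct (hA : IsFirmDomain k A) (hB : IsFirmDomain k B) :
    IsFirmDomain k (A ⊗[k] B) :=
  fun C _ _ hC =>
    have := hA _ (hB C hC)
    (Algebra.TensorProduct.assoc k k k A B C).toMulEquiv.isDomain _

end FirmDomain

/-- Lemma 1.2: for filtrations `F` of `A` and `G` of `B`, the family
`H i = Σ_{j ≤ i} F j ⊗ G (i - j)` is an ℕ-filtration of `A ⊗ B`, whose associated graded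
algebra is isomorphic, as a graded algebra, to `gr_F(A) ⊗ gr_G(B)`; moreover `H` is good if
`F` is good and `G` is firm, and `H` is firm if both `F` and `G` are firm. -/
theorem statement13 {k : Type v} [Field k]
    (A : Type u) [Ring A] [Algebra k A] (B : Type u) [Ring B] [Algebra k B]
    (𝓕 : AlgFiltration k A) (𝓖 : AlgFiltration k B) :
    ∃ 𝓗 : AlgFiltration k (A ⊗[k] B),
      (∀ i : ℕ, 𝓗.F i = ⨆ j ∈ Finset.range (i + 1), tensorSub k (𝓕.F j) (𝓖.F (i - j))) ∧
      (∃ e : 𝓗.gr ≃ₐ[k] (𝓕.gr ⊗[k] 𝓖.gr),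
        ∀ i : ℕ, Submodule.map e.toLinearMap (𝓗.grPiece i)
          = ⨆ j ∈ Finset.range (i + 1), tensorSub k (𝓕.grPiece j) (𝓖.grPiece (i - j))) ∧
      (IsDomain 𝓕.gr → IsFirmDomain k 𝓖.gr → IsDomain 𝓗.gr) ∧
      (IsFirmDomain k 𝓕.gr → IsFirmDomain k 𝓖.gr → IsFirmDomain k 𝓗.gr) := by
  refine ⟨𝓕.tensor 𝓖, fun _ => rfl,
    ⟨𝓕.grTensorEquiv 𝓖, 𝓕.map_grTensorEquiv_grPiece 𝓖⟩, fun _ hG => ?_, fun hF hG => ?_⟩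
  · have := hG.isDomain_tensorProduct (A := 𝓕.gr)
    exact (𝓕.grTensorEquiv 𝓖).toMulEquiv.isDomain _
  · exact (hF.tensorProduct hG).of_algEquiv (𝓕.grTensorEquiv 𝓖)
end
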